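/- arXiv:2001.00366 — 2 statements merged into one kernel-verified Lean document; each statement's English description precedes it below -/
import Mathlib

section
/- Let Δ be a simplicial complex on [n], i a player, and 0 ≤ λᵢ ≤ 1. A linear functional φᵢ on the space of cooperative games on Δ satisfies the λᵢ-dummy axiom (φᵢ(v) = λᵢ·v({i}) whenever i is dummy for v) and the monotonicity axiom (φᵢ(v) ≥ 0 whenever v is monotone) if and only if there exist nonnegative reals {p_T^i : T ∈ Link_i(Δ)} with ∑_{T ∈ Link_i(Δ)} p_T^i = λᵢ such that φᵢ(v) = ∑_{T ∈ Link_i(Δ)} p_T^i · (v(T ∪ {i}) − v(T)) for all games v. -/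
open Finset

noncomputable section

def IsComplex {n : ℕ} (Δ : Finset (Finset (Fin n))) : Prop :=
  ∀ S ∈ Δ, ∀ T, T ⊆ S → T ∈ Δ

def carrier {n : ℕ} (T : Finset (Fin n)) : Finset (Fin n) → ℝ :=
  fun S => if T ⊆ S then 1 else 0

def carrierHat {n : ℕ} (T : Finset (Fin n)) : Finset (Fin n) → ℝ :=
  fun S => if T ⊂ S then 1 else 0

def indicatorGame {n : ℕ} (T : Finset (Fin n)) : Finset (Fin n) → ℝ :=
  fun S => if S = T then 1 else 0

def Link {n : ℕ} (i : Fin n) (Δ : Finset (Finset (Fin n))) : Finset (Finset (Fin n)) :=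
  Δ.filter fun T => i ∉ T ∧ insert i T ∈ Δ

def IsDummy {n : ℕ} (Δ : Finset (Finset (Fin n))) (v : Finset (Fin n) → ℝ) (i : Fin n) : Prop :=
  ∀ S ∈ Δ, i ∉ S → insert i S ∈ Δ → v (insert i S) = v S + v {i}

def MonotoneGame {n : ℕ} (Δ : Finset (Finset (Fin n))) (v : Finset (Fin n) → ℝ) : Prop :=
  ∀ S T : Finset (Fin n), T ∈ Δ → S ⊆ T → v S ≤ v T

def Facets {n : ℕ} (Δ : Finset (Finset (Fin n))) : Finset (Finset (Fin n)) :=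
  Δ.filter fun F => ∀ G ∈ Δ, F ⊆ G → F = G

def FacetsI {n : ℕ} (i : Fin n) (Δ : Finset (Finset (Fin n))) : Finset (Finset (Fin n)) :=
  (Facets Δ).filter fun F => i ∈ F

def wP {n : ℕ} (Δ : Finset (Finset (Fin n))) (P : Finset (Fin n) → ℝ)
    (T : Finset (Fin n)) : ℝ :=
  ∑ F ∈ (Facets Δ).filter (fun F => T ⊆ F), P F

def IsPure {n : ℕ} (Δ : Finset (Finset (Fin n))) : Prop :=
  ∀ F ∈ Facets Δ, ∀ G ∈ Facets Δ, F.card = G.card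

def shapley {n : ℕ} (F : Finset (Fin n)) (i : Fin n) (v : Finset (Fin n) → ℝ) : ℝ :=
  ∑ S ∈ (F.erase i).powerset,
    ((Nat.factorial S.card * Nat.factorial (F.card - S.card - 1) : ℝ) /
        (Nat.factorial F.card : ℝ)) * (v (insert i S) - v S)

def facetPolytope {n : ℕ} (Δ : Finset (Finset (Fin n))) : Set (Fin n → ℝ) :=
  convexHull ℝ {x : Fin n → ℝ | ∃ F ∈ Facets Δ, x = fun i => if i ∈ F then (1 : ℝ) else 0}

/-!
Write `δ_S` for the indicator game of `S`. Every game `v` splits as `u + (v - u)` with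
`u S = v (S \ {i})`: in `u` the player `i` is null, so the dummy axiom gives `φ u = 0`, while on `Δ`
the game `v - u` is the combination of the `δ_{T ∪ {i}}`, `T ∈ Link_i(Δ)`, with coefficients
the marginal contributions `v (T ∪ {i}) - v T`. A game vanishing on `Δ` is monotone together with
its negative, so by the monotonicity axiom `φ` only sees values on `Δ`; hence
`φ v = ∑_T φ(δ_{T ∪ {i}}) (v (T ∪ {i}) - v T)`. Testing against the monotone games `S ↦ [T ⊊ S]`
and the dummy game `S ↦ [i ∈ S]` shows that these weights are nonnegative and sum to `λ`.
-/

section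

variable {n : ℕ} {Δ : Finset (Finset (Fin n))} {i : Fin n} {T : Finset (Fin n)}

theorem mem_link_iff : T ∈ Link i Δ ↔ T ∈ Δ ∧ i ∉ T ∧ insert i T ∈ Δ :=
  mem_filter

theorem MonotoneGame.of_monotone {v : Finset (Fin n) → ℝ} (hv : Monotone v) :
    MonotoneGame Δ v :=
  fun _ _ _ hST => hv hST

theorem IsComplex.monotoneGame_of_eqOn_zero (hΔ : IsComplex Δ) {v : Finset (Fin n) → ℝ}
    (hv : ∀ S ∈ Δ, v S = 0) : MonotoneGame Δ v :=
  fun S T hT hST => by rw [hv S (hΔ T hT S hST), hv T hT]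

theorem IsComplex.map_eq_of_eqOn (hΔ : IsComplex Δ) (φ : (Finset (Fin n) → ℝ) →ₗ[ℝ] ℝ)
    (hmono : ∀ v : Finset (Fin n) → ℝ, v ∅ = 0 → MonotoneGame Δ v → 0 ≤ φ v)
    {v w : Finset (Fin n) → ℝ} (hv : v ∅ = 0) (hw : w ∅ = 0) (hvw : ∀ S ∈ Δ, v S = w S) :
    φ v = φ w := by
  have hzero : ∀ S ∈ Δ, (v - w) S = 0 := fun S hS => sub_eq_zero.mpr (hvw S hS)
  have hpos := hmono (v - w) (by simp [hv, hw]) (hΔ.monotoneGame_of_eqOn_zero hzero)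
  have hneg := hmono (-(v - w)) (by simp [hv, hw])
    (hΔ.monotoneGame_of_eqOn_zero fun S hS => by simp [hzero S hS])
  rw [map_neg, map_sub] at hneg
  rw [map_sub] at hpos
  linarith

theorem isDummy_comp_erase {v : Finset (Fin n) → ℝ} (hv : v ∅ = 0) :
    IsDummy Δ (fun S => v (S.erase i)) i := by
  intro S _ hiS _
  simp [erase_insert hiS, erase_eq_of_notMem hiS, hv]

theorem IsComplex.sum_link_smul_indicatorGame_apply (hΔ : IsComplex Δ)
    (c : Finset (Fin n) → ℝ) {S : Finset (Fin n)} (hS : S ∈ Δ) :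
    (∑ T ∈ Link i Δ, c T • indicatorGame (insert i T)) S = if i ∈ S then c (S.erase i) else 0 := by
  simp only [Finset.sum_apply, Pi.smul_apply, indicatorGame, smul_eq_mul, mul_ite, mul_one, mul_zero]
  split_ifs with hiS
  · have hlink : S.erase i ∈ Link i Δ :=
      mem_link_iff.mpr ⟨hΔ S hS _ (erase_subset i S), notMem_erase i S, by rwa [insert_erase hiS]⟩
    calc ∑ T ∈ Link i Δ, (if S = insert i T then c T else 0)
        = ∑ T ∈ Link i Δ, (if S.erase i = T then c T else 0) :=
          sum_congr rfl fun T hT =>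
            if_congr (erase_eq_iff_eq_insert hiS (mem_link_iff.mp hT).2.1).symm rfl rfl
      _ = c (S.erase i) := by rw [sum_ite_eq, if_pos hlink]
  · refine sum_eq_zero fun T _ => if_neg ?_
    rintro rfl
    exact hiS (mem_insert_self i T)

theorem IsComplex.map_eq_sum_link (hΔ : IsComplex Δ) (φ : (Finset (Fin n) → ℝ) →ₗ[ℝ] ℝ)
    (hnull : ∀ v : Finset (Fin n) → ℝ, v ∅ = 0 → IsDummy Δ v i → v {i} = 0 → φ v = 0)
    (hmono : ∀ v : Finset (Fin n) → ℝ, v ∅ = 0 → MonotoneGame Δ v → 0 ≤ φ v)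
    {v : Finset (Fin n) → ℝ} (hv : v ∅ = 0) :
    φ v = ∑ T ∈ Link i Δ, φ (indicatorGame (insert i T)) * (v (insert i T) - v T) := by
  set u : Finset (Fin n) → ℝ := fun S => v (S.erase i)
  have hu : φ u = 0 := hnull u (by simp [u, hv]) (isDummy_comp_erase hv) (by simp [u, hv])
  have hlocal : φ (v - u) =
      φ (∑ T ∈ Link i Δ, (v (insert i T) - v T) • indicatorGame (insert i T)) := by
    refine hΔ.map_eq_of_eqOn φ hmono (by simp [u, hv]) ?_ fun S hS => ?_
    · simp [Finset.sum_apply, indicatorGame, (insert_ne_empty _ _).symm]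
    · rw [hΔ.sum_link_smul_indicatorGame_apply _ hS]
      split_ifs with hiS
      · simp [u, insert_erase hiS]
      · simp [u, erase_eq_of_notMem hiS]
  calc φ v = φ u + φ (v - u) := by rw [← map_add, add_sub_cancel]
    _ = _ := by simp [hu, hlocal, map_sum, mul_comm]

theorem monotone_carrierHat : Monotone (carrierHat T) := by
  intro S S' hSS'
  unfold carrierHat
  split_ifs with h h'
  · exact le_rfl
  · exact absurd (h.trans_subset hSS') h'
  · exact zero_le_one
  · exact le_rfl

theorem carrierHat_insert_sub_carrierHat {T' : Finset (Fin n)} (hT : i ∉ T) :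
    carrierHat T (insert i T') - carrierHat T T' = if T = T' then 1 else 0 := by
  have hssubset : T ⊂ insert i T' ↔ T ⊆ T' := by
    rw [ssubset_iff_subset_ne, subset_insert_iff_of_notMem hT]
    exact and_iff_left fun h => hT (h ▸ mem_insert_self i T')
  by_cases hTT : T = T'
  · simp [carrierHat, ← hTT, ssubset_insert hT]
  · simp [carrierHat, hssubset, hTT, Finset.ssubset_iff_subset_ne]

theorem sum_link_mul_carrierHat_sub (p : Finset (Fin n) → ℝ) (hT : T ∈ Link i Δ) :
    ∑ T' ∈ Link i Δ, p T' * (carrierHat T (insert i T') - carrierHat T T') = p T := by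
  simp [carrierHat_insert_sub_carrierHat (mem_link_iff.mp hT).2.1, hT]

theorem isDummy_carrier_singleton : IsDummy Δ (carrier {i}) i := by
  intro S _ hiS _
  simp [carrier, hiS]

theorem sum_link_mul_carrier_singleton_sub (p : Finset (Fin n) → ℝ) :
    ∑ T ∈ Link i Δ, p T * (carrier {i} (insert i T) - carrier {i} T) = ∑ T ∈ Link i Δ, p T :=
  sum_congr rfl fun T hT => by simp [carrier, (mem_link_iff.mp hT).2.1]

end

theorem dummy_and_monotone_characterization_general {n : ℕ} (Δ : Finset (Finset (Fin n)))
    (hΔ : IsComplex Δ) (i : Fin n) (lam : ℝ)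
    (φ : (Finset (Fin n) → ℝ) →ₗ[ℝ] ℝ) :
    ((∀ v : Finset (Fin n) → ℝ, v ∅ = 0 → IsDummy Δ v i → φ v = lam * v {i}) ∧
     (∀ v : Finset (Fin n) → ℝ, v ∅ = 0 → MonotoneGame Δ v → 0 ≤ φ v))
    ↔ ∃ p : Finset (Fin n) → ℝ,
        (∀ T ∈ Link i Δ, 0 ≤ p T) ∧
        (∑ T ∈ Link i Δ, p T = lam) ∧
        (∀ v : Finset (Fin n) → ℝ, v ∅ = 0 →
          φ v = ∑ T ∈ Link i Δ, p T * (v (insert i T) - v T)) := by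
  constructor
  · rintro ⟨hdummy, hmono⟩
    have hrepr (v : Finset (Fin n) → ℝ) (hv : v ∅ = 0) :=
      hΔ.map_eq_sum_link φ (fun w hw hd hwi => by rw [hdummy w hw hd, hwi, mul_zero]) hmono hv
    refine ⟨fun T => φ (indicatorGame (insert i T)), fun T hT => ?_, ?_, hrepr⟩
    · have hT₀ : carrierHat T ∅ = 0 := by simp [carrierHat]
      calc 0 ≤ φ (carrierHat T) := hmono _ hT₀ (MonotoneGame.of_monotone monotone_carrierHat)
        _ = _ := by rw [hrepr _ hT₀, sum_link_mul_carrierHat_sub _ hT]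
    · have hφ := hdummy (carrier {i}) (by simp [carrier]) isDummy_carrier_singleton
      rw [← sum_link_mul_carrier_singleton_sub, ← hrepr _ (by simp [carrier]), hφ]
      simp [carrier]
  · rintro ⟨p, hp, hsum, hrepr⟩
    refine ⟨fun v hv hd => ?_, fun v hv hm => ?_⟩
    · rw [hrepr v hv, ← hsum, sum_mul]
      refine sum_congr rfl fun T hT => ?_
      obtain ⟨hTΔ, hiT, hiTΔ⟩ := mem_link_iff.mp hT
      rw [hd T hTΔ hiT hiTΔ, add_sub_cancel_left]
    · rw [hrepr v hv]
      refine sum_nonneg fun T hT => mul_nonneg (hp T hT) (sub_nonneg.mpr ?_)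
      exact hm _ _ (mem_link_iff.mp hT).2.2 (subset_insert i T)

theorem dummy_and_monotone_characterization {n : ℕ} (Δ : Finset (Finset (Fin n)))
    (hΔ : IsComplex Δ) (hempty : ∅ ∈ Δ) (i : Fin n) (lam : ℝ) (hl0 : 0 ≤ lam) (hl1 : lam ≤ 1)
    (φ : (Finset (Fin n) → ℝ) →ₗ[ℝ] ℝ) :
    ((∀ v : Finset (Fin n) → ℝ, v ∅ = 0 → IsDummy Δ v i → φ v = lam * v {i}) ∧
     (∀ v : Finset (Fin n) → ℝ, v ∅ = 0 → MonotoneGame Δ v → 0 ≤ φ v))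
    ↔ ∃ p : Finset (Fin n) → ℝ,
        (∀ T ∈ Link i Δ, 0 ≤ p T) ∧
        (∑ T ∈ Link i Δ, p T = lam) ∧
        (∀ v : Finset (Fin n) → ℝ, v ∅ = 0 →
          φ v = ∑ T ∈ Link i Δ, p T * (v (insert i T) - v T)) :=
  dummy_and_monotone_characterization_general Δ hΔ i lam φ
end
end

section
/- Let Δ be a pure simplicial complex on [n] and P a probability distribution on its facets. The group value φᵢ(v) = ∑_{F ∈ Facets_i(Δ)} P(F) Shapley_i^F(v|_F) satisfies the substitution axiom for carrier games: for every nonempty face T ∈ Δ and every pair of players i, j ∈ T, φᵢ(v_T) = φⱼ(v_T). -/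
open Finset

noncomputable section

/-! For `i ∈ T` and `S ⊆ F \ {i}`, the marginal contribution of `i` to `v_T` at `S` is `1` exactly
when `T \ {i} ⊆ S`. Summing the Shapley weights over these `S` (a hockey-stick identity) gives
`Shapley_i^F(v_T) = 1/|T|` when `T ⊆ F`, and `0` otherwise. Hence `φᵢ(v_T) = w^P(T)/|T|` for every
`i ∈ T`. -/

open scoped Nat

section

theorem Nat.sum_range_choose_mul_factorial_add_mul_factorial_sub (a m : ℕ) :
    (∑ k ∈ range (m + 1), m.choose k * ((a + k)! * (m - k)!)) * (a + 1) = (a + m + 1)! := by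
  have hterm : ∀ k ∈ range (m + 1),
      m.choose k * ((a + k)! * (m - k)!) = m ! * a ! * (k + a).choose a := by
    intro k hk
    apply Nat.eq_of_mul_eq_mul_left k.factorial_pos
    calc k ! * (m.choose k * ((a + k)! * (m - k)!))
        = (m.choose k * k ! * (m - k)!) * (a + k)! := by ring
      _ = m ! * ((k + a).choose a * k ! * a !) := by
        rw [Nat.choose_mul_factorial_mul_factorial (mem_range_succ_iff.mp hk),
          Nat.add_choose_mul_factorial_mul_factorial, add_comm k]
      _ = k ! * (m ! * a ! * (k + a).choose a) := by ring
  calc (∑ k ∈ range (m + 1), m.choose k * ((a + k)! * (m - k)!)) * (a + 1)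
      = (m + (a + 1)).choose (a + 1) * m ! * (a + 1)! := by
        rw [sum_congr rfl hterm, ← mul_sum, Nat.sum_range_add_choose, Nat.factorial_succ]
        ring_nf
    _ = (a + m + 1)! := by
        rw [Nat.add_choose_mul_factorial_mul_factorial]
        ring_nf

theorem sum_shapleyWeight_eq_inv (a m : ℕ) :
    ∑ k ∈ range (m + 1), m.choose k •
      (((a + k)! * (a + m + 1 - (a + k) - 1)! : ℝ) / (a + m + 1)!) = 1 / (a + 1) := by
  have hterm : ∀ k ∈ range (m + 1), m.choose k •
      (((a + k)! * (a + m + 1 - (a + k) - 1)! : ℝ) / (a + m + 1)!)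
        = ((m.choose k * ((a + k)! * (m - k)!) : ℕ) : ℝ) / (a + m + 1)! := by
    intro k _
    rw [show a + m + 1 - (a + k) - 1 = m - k by omega, nsmul_eq_mul]
    push_cast
    ring
  rw [sum_congr rfl hterm, ← sum_div, ← Nat.cast_sum, eq_div_iff (by positivity),
    div_mul_eq_mul_div, ← Nat.cast_add_one, ← Nat.cast_mul,
    Nat.sum_range_choose_mul_factorial_add_mul_factorial_sub, div_self (by positivity)]

variable {α : Type*} [DecidableEq α]

theorem sum_powerset_filter_superset_apply_card {M : Type*} [AddCommMonoid M] {A E : Finset α}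
    (hAE : A ⊆ E) (g : ℕ → M) :
    ∑ S ∈ E.powerset with A ⊆ S, g S.card
      = ∑ k ∈ range ((E \ A).card + 1), (E \ A).card.choose k • g (A.card + k) := by
  rw [← sum_powerset_apply_card]
  refine sum_nbij' (· \ A) (A ∪ ·) ?_ ?_ ?_ ?_ ?_
  · intro S hS
    rw [mem_filter, mem_powerset] at hS
    exact mem_powerset.mpr <| sdiff_subset_sdiff hS.1 subset_rfl
  · intro B hB
    rw [mem_powerset] at hB
    rw [mem_filter, mem_powerset]
    exact ⟨union_subset hAE (hB.trans sdiff_subset), subset_union_left⟩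
  · intro S hS
    exact union_sdiff_of_subset (mem_filter.mp hS).2
  · intro B hB
    exact union_sdiff_cancel_left (disjoint_sdiff.mono_right (mem_powerset.mp hB))
  · intro S hS
    have hAS : A ⊆ S := (mem_filter.mp hS).2
    rw [card_sdiff_of_subset hAS, Nat.add_sub_cancel' (card_le_card hAS)]

end

section

variable {n : ℕ}

theorem carrier_insert_sub_carrier {T S : Finset (Fin n)} {i : Fin n} (hiT : i ∈ T)
    (hiS : i ∉ S) : carrier T (insert i S) - carrier T S = if T.erase i ⊆ S then 1 else 0 := by
  have hTS : ¬ T ⊆ S := fun h => hiS (h hiT)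
  simp only [carrier, subset_insert_iff, hTS, if_false, sub_zero]

theorem shapley_carrier_of_subset {F T : Finset (Fin n)} {i : Fin n} (hiT : i ∈ T)
    (hTF : T ⊆ F) : shapley F i (carrier T) = 1 / T.card := by
  set A := T.erase i
  set E := F.erase i
  have hAE : A ⊆ E := erase_subset_erase i hTF
  have hTcard : T.card = A.card + 1 := (card_erase_add_one hiT).symm
  have hFcard : F.card = A.card + (E \ A).card + 1 := by
    have hEcard : E.card + 1 = F.card := card_erase_add_one (hTF hiT)
    have := card_le_card hAE
    rw [card_sdiff_of_subset hAE]
    omega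
  calc shapley F i (carrier T)
      = ∑ S ∈ E.powerset with A ⊆ S, (S.card ! * (F.card - S.card - 1)! : ℝ) / F.card ! := by
        rw [shapley, sum_filter]
        refine sum_congr rfl fun S hS => ?_
        rw [carrier_insert_sub_carrier hiT fun h => notMem_erase i F (mem_powerset.mp hS h),
          mul_ite, mul_one, mul_zero]
    _ = ∑ k ∈ range ((E \ A).card + 1), (E \ A).card.choose k •
          (((A.card + k)! * (F.card - (A.card + k) - 1)! : ℝ) / F.card !) :=
        sum_powerset_filter_superset_apply_card hAE
          fun s => ((s ! * (F.card - s - 1)! : ℝ) / F.card !)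
    _ = 1 / T.card := by
        rw [hFcard, sum_shapleyWeight_eq_inv, hTcard]
        push_cast
        rfl

theorem shapley_carrier_of_not_subset {F T : Finset (Fin n)} {i : Fin n} (hiF : i ∈ F)
    (hTF : ¬ T ⊆ F) : shapley F i (carrier T) = 0 := by
  refine sum_eq_zero fun S hS => ?_
  have hSF : insert i S ⊆ F :=
    insert_subset hiF ((mem_powerset.mp hS).trans (erase_subset i F))
  have hTS : ¬ T ⊆ insert i S := fun h => hTF (h.trans hSF)
  have hTS' : ¬ T ⊆ S := fun h => hTS (h.trans (subset_insert i S))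
  simp only [carrier, hTS, hTS', if_false, sub_zero, mul_zero]

theorem sum_filter_mem_mul_shapley_carrier (𝓕 : Finset (Finset (Fin n)))
    (P : Finset (Fin n) → ℝ) {T : Finset (Fin n)} {i : Fin n} (hiT : i ∈ T) :
    ∑ F ∈ 𝓕 with i ∈ F, P F * shapley F i (carrier T) = (∑ F ∈ 𝓕 with T ⊆ F, P F) / T.card := by
  rw [sum_filter, sum_filter, sum_div]
  refine sum_congr rfl fun F _ => ?_
  by_cases hTF : T ⊆ F
  · rw [if_pos (hTF hiT), if_pos hTF, shapley_carrier_of_subset hiT hTF, mul_one_div]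
  · rw [if_neg hTF, zero_div]
    split_ifs with hiF
    · rw [shapley_carrier_of_not_subset hiF hTF, mul_zero]
    · rfl

end

theorem substitution_axiom_for_carrier_games_general {n : ℕ} (Δ : Finset (Finset (Fin n)))
    (P : Finset (Fin n) → ℝ)
    (T : Finset (Fin n))
    (i j : Fin n) (hi : i ∈ T) (hj : j ∈ T) :
    (∑ F ∈ FacetsI i Δ, P F * shapley F i (carrier T))
      = ∑ F ∈ FacetsI j Δ, P F * shapley F j (carrier T) := by
  rw [FacetsI, FacetsI, sum_filter_mem_mul_shapley_carrier _ P hi,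
    sum_filter_mem_mul_shapley_carrier _ P hj]

theorem substitution_axiom_for_carrier_games {n : ℕ} (Δ : Finset (Finset (Fin n)))
    (hΔ : IsComplex Δ) (hpure : IsPure Δ) (P : Finset (Fin n) → ℝ)
    (hP0 : ∀ F ∈ Facets Δ, 0 ≤ P F) (hP1 : ∑ F ∈ Facets Δ, P F = 1)
    (T : Finset (Fin n)) (hT : T ∈ Δ) (hTne : T ≠ ∅)
    (i j : Fin n) (hi : i ∈ T) (hj : j ∈ T) :
    (∑ F ∈ FacetsI i Δ, P F * shapley F i (carrier T))
      = ∑ F ∈ FacetsI j Δ, P F * shapley F j (carrier T) :=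
  substitution_axiom_for_carrier_games_general Δ P T i j hi hj
end
end
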